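/- Let k be a field of characteristic different from 2, let n ≥ 1, and let R = k[x₁, …, xₙ] be the polynomial ring. Let σ be the k-algebra involution of R determined by σ(x₁) = −x₁ and σ(xᵢ) = xᵢ for i ≥ 2. Let M be an R-module equipped with an additive involution s : M → M satisfying s(s(m)) = m and s(r • m) = σ(r) • s(m) for all r ∈ R, m ∈ M. If s induces the identity on M/(x₁)M, i.e. s(m) − m ∈ x₁·M for all m ∈ M, then M is generated as an R-module by its fixed submodule M^s = {m ∈ M : s(m) = m}; that is, the natural map R ⊗_k M^s → M is surjective. -/

import Mathlib

/-!
Write `2m = (m + s m) + (m - s m)`. The first summand is fixed by `s`. The second is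
anti-invariant and lies in `x₁ M`, say `x₁ w`; since `σ x₁ = -x₁`, anti-invariance gives
`x₁ s(w) = x₁ w`, so `2 x₁ w = x₁ (w + s w)` lies in `x₁ M^s`. Hence `4m` lies in the span of
`M^s`, and so does `m` because `2` is invertible.
-/

open Submodule

section Semilinear

variable {R M : Type*} [CommRing R] [AddCommGroup M] [Module R M] {σ : R →+* R}
  (s : M →ₛₗ[σ] M)

lemma add_apply_mem_span_fixed (hs : ∀ m, s (s m) = m) (m : M) :
    m + s m ∈ span R {m : M | s m = m} :=
  subset_span (by simp [hs, add_comm])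

lemma two_smul_smul_mem_span_fixed {x : R} (hx : σ x = -x) (hs : ∀ m, s (s m) = m)
    {w : M} (hw : s (x • w) = -(x • w)) :
    (2 : R) • x • w ∈ span R {m : M | s m = m} := by
  have hxw : x • s w = x • w := by
    rwa [map_smulₛₗ, hx, neg_smul, neg_inj] at hw
  have h : (2 : R) • x • w = x • (w + s w) := by
    rw [smul_add, hxw, two_smul]
  rw [h]
  exact smul_mem _ x (add_apply_mem_span_fixed s hs w)

theorem span_fixed_eq_top (h2 : IsUnit (2 : R)) {x : R} (hx : σ x = -x)
    (hs : ∀ m, s (s m) = m) (hid : ∀ m : M, ∃ m', s m - m = x • m') :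
    span R {m : M | s m = m} = ⊤ := by
  refine eq_top_iff'.mpr fun m ↦ ?_
  obtain ⟨m', hm'⟩ := hid m
  have hdiff : m - s m = x • -m' := by rw [smul_neg, ← hm', neg_sub]
  have hanti : s (x • -m') = -(x • -m') := by rw [← hdiff, map_sub, hs, neg_sub]
  have hdecomp : (2 : R) • (2 : R) • m = (2 : R) • (m + s m) + (2 : R) • x • -m' := by
    rw [← hdiff, ← smul_add, add_add_sub_cancel, two_smul R m]
  rw [← smul_mem_iff_of_isUnit _ h2, ← smul_mem_iff_of_isUnit _ h2, hdecomp]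
  exact add_mem (smul_mem _ 2 (add_apply_mem_span_fixed s hs m))
    (two_smul_smul_mem_span_fixed s hx hs hanti)

end Semilinear

theorem stmt3_general {k : Type*} [Field k] (h2 : (2 : k) ≠ 0)
    (n : ℕ) (hn : 0 < n)
    (σ : MvPolynomial (Fin n) k →ₐ[k] MvPolynomial (Fin n) k)
    (hσ0 : σ (MvPolynomial.X ⟨0, hn⟩) = - MvPolynomial.X ⟨0, hn⟩)
    {M : Type*} [AddCommGroup M] [Module (MvPolynomial (Fin n) k) M]
    (s : M → M)
    (hadd : ∀ m m' : M, s (m + m') = s m + s m')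
    (hinv : ∀ m : M, s (s m) = m)
    (hsemi : ∀ (r : MvPolynomial (Fin n) k) (m : M), s (r • m) = σ r • s m)
    (hid : ∀ m : M, ∃ m' : M,
      s m - m = (MvPolynomial.X ⟨0, hn⟩ : MvPolynomial (Fin n) k) • m') :
    Submodule.span (MvPolynomial (Fin n) k) {m : M | s m = m} = ⊤ := by
  let sₗ : M →ₛₗ[σ.toRingHom] M := { toFun := s, map_add' := hadd, map_smul' := hsemi }
  have h2R : IsUnit (2 : MvPolynomial (Fin n) k) := by
    simpa only [map_ofNat] using h2.isUnit.map (algebraMap k (MvPolynomial (Fin n) k))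
  exact span_fixed_eq_top sₗ h2R hσ0 hinv hid

/-- Let `k` be a field with `char k ≠ 2`, `R = k[x₁,…,xₙ]` (n ≥ 1),
and `σ` the `k`-algebra involution with `σ(x₁) = -x₁`, `σ(xᵢ) = xᵢ` for `i ≥ 2`.
If `M` is an `R`-module with a compatible additive involution `s` (i.e.
`s(r•m) = σ(r)•s(m)`) which is the identity modulo `x₁·M`, then `M` is generated
over `R` by the fixed submodule `M^s`. -/
theorem stmt3 {k : Type*} [Field k] (h2 : (2 : k) ≠ 0)
    (n : ℕ) (hn : 0 < n)
    (σ : MvPolynomial (Fin n) k →ₐ[k] MvPolynomial (Fin n) k)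
    (hσ0 : σ (MvPolynomial.X ⟨0, hn⟩) = - MvPolynomial.X ⟨0, hn⟩)
    (hσ : ∀ i : Fin n, i ≠ ⟨0, hn⟩ → σ (MvPolynomial.X i) = MvPolynomial.X i)
    {M : Type*} [AddCommGroup M] [Module (MvPolynomial (Fin n) k) M]
    (s : M → M)
    (hadd : ∀ m m' : M, s (m + m') = s m + s m')
    (hinv : ∀ m : M, s (s m) = m)
    (hsemi : ∀ (r : MvPolynomial (Fin n) k) (m : M), s (r • m) = σ r • s m)
    (hid : ∀ m : M, ∃ m' : M,
      s m - m = (MvPolynomial.X ⟨0, hn⟩ : MvPolynomial (Fin n) k) • m') :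
    Submodule.span (MvPolynomial (Fin n) k) {m : M | s m = m} = ⊤ :=
  stmt3_general h2 n hn σ hσ0 s hadd hinv hsemi hid
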